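/- (Self-duality of the resolvent of d-dimensional geometric Brownian motion, Proposition 2.1.) Let r > 0 and for a nonnegative measurable function g on (0,∞)^d define G_r g(x) := ∫₀^∞ ∫_{(0,∞)^d} e^{−rt} q(t;x,y) g(y) dy dt. Then for all nonnegative measurable functions f, g on (0,∞)^d: ∫_{(0,∞)^d} f(x) · G_r g(x) · h(x) dx = ∫_{(0,∞)^d} g(x) · G_r f(x) · h(x) dx. -/

import Mathlib

open MeasureTheory Matrix Real BigOperators
open scoped ENNReal NNReal

/-- The lognormal transition density `q(t;x,y)` of a `d`-dimensional geometric Brownian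
motion with volatility vector `a`, drift vector `mbar` (in log-coordinates) and
correlation matrix `S`. -/
noncomputable def lognormalDensity {d : ℕ} (a mbar : Fin d → ℝ)
    (S : Matrix (Fin d) (Fin d) ℝ) (t : ℝ) (x y : Fin d → ℝ) : ℝ :=
  let z : Fin d → ℝ := fun i => (1 / a i) * Real.log (y i / x i)
  (2 * Real.pi * t) ^ (-(d : ℝ) / 2) * S.det ^ (-(1 : ℝ) / 2) * (∏ i, a i * y i)⁻¹ *
    Real.exp (-(1 / (2 * t)) * ((z - t • mbar) ⬝ᵥ S⁻¹.mulVec (z - t • mbar)))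

/-- The density `h(y)` of the duality measure `m(dy) = h(y) dy`. -/
noncomputable def weight {d : ℕ} (a mbar : Fin d → ℝ)
    (S : Matrix (Fin d) (Fin d) ℝ) (y : Fin d → ℝ) : ℝ :=
  (∏ i, (y i)⁻¹) *
    Real.exp (2 * (mbar ⬝ᵥ S⁻¹.mulVec fun i => (1 / a i) * Real.log (y i)))

/-- The resolvent `G_r g(x) = ∫₀^∞ ∫_{(0,∞)^d} e^{-rt} q(t;x,y) g(y) dy dt`. -/
noncomputable def gbmResolvent {d : ℕ} (a mbar : Fin d → ℝ)
    (S : Matrix (Fin d) (Fin d) ℝ) (r : ℝ) (g : (Fin d → ℝ) → ℝ≥0∞)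
    (x : Fin d → ℝ) : ℝ≥0∞ :=
  ∫⁻ t in Set.Ioi (0 : ℝ), ∫⁻ y in Set.univ.pi fun _ : Fin d => Set.Ioi (0 : ℝ),
    ENNReal.ofReal (Real.exp (-r * t) * lognormalDensity a mbar S t x y) * g y

/-!
Write `ℓ(x)_i = a_i⁻¹ log x_i`. In log-coordinates the transition density is Gaussian in
`ℓ(y) - ℓ(x) - t m̄`, and reversing the increment `ℓ(y) - ℓ(x)` changes the quadratic form in the
exponent by `4 t ⟪m̄, Σ⁻¹ (ℓ(y) - ℓ(x))⟫`. This is exactly compensated by the factor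
`exp (2 ⟪m̄, Σ⁻¹ ℓ⟫)` in `h`, and the Jacobian factors `∏ y_i⁻¹` trade places in the same way, so
`q(t;x,y) h(x) = q(t;y,x) h(y)` (detailed balance). Multiplying by `e^{-rt} f(x) g(y)`,
integrating and exchanging the order of integration by Tonelli gives the duality.
-/

section DetailedBalance

variable {τ α : Type*} [MeasurableSpace τ] [MeasurableSpace α] {ν : Measure τ} {μ : Measure α}
  [SFinite ν] [SFinite μ]

theorem lintegral_mul_lintegral_lintegral_comm_of_symm {K : τ → α → α → ℝ≥0∞}
    (hK : Measurable fun p : τ × α × α => K p.1 p.2.1 p.2.2)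
    (hsymm : ∀ᵐ t ∂ν, ∀ᵐ x ∂μ, ∀ᵐ y ∂μ, K t x y = K t y x)
    {f g : α → ℝ≥0∞} (hf : Measurable f) (hg : Measurable g) :
    ∫⁻ x, f x * ∫⁻ t, ∫⁻ y, K t x y * g y ∂μ ∂ν ∂μ
      = ∫⁻ x, g x * ∫⁻ t, ∫⁻ y, K t x y * f y ∂μ ∂ν ∂μ := by
  have hswap : ∀ f g : α → ℝ≥0∞, Measurable f → Measurable g →
      ∫⁻ x, f x * ∫⁻ t, ∫⁻ y, K t x y * g y ∂μ ∂ν ∂μ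
        = ∫⁻ t, ∫⁻ x, ∫⁻ y, f x * K t x y * g y ∂μ ∂μ ∂ν := by
    intro f g hf hg
    calc ∫⁻ x, f x * ∫⁻ t, ∫⁻ y, K t x y * g y ∂μ ∂ν ∂μ
        = ∫⁻ x, ∫⁻ t, ∫⁻ y, f x * K t x y * g y ∂μ ∂ν ∂μ := by
          refine lintegral_congr fun x => ?_
          rw [← lintegral_const_mul _ (by fun_prop)]
          refine lintegral_congr fun t => ?_
          rw [← lintegral_const_mul _ (by fun_prop)]
          simp only [mul_assoc]
      _ = _ := lintegral_lintegral_swap (by fun_prop)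
  rw [hswap f g hf hg, hswap g f hg hf]
  refine lintegral_congr_ae (hsymm.mono fun t ht => ?_)
  calc ∫⁻ x, ∫⁻ y, f x * K t x y * g y ∂μ ∂μ
      = ∫⁻ x, ∫⁻ y, f x * K t y x * g y ∂μ ∂μ :=
        lintegral_congr_ae <| ht.mono fun x hx =>
          lintegral_congr_ae <| hx.mono fun y hy => by simp only [hy]
    _ = ∫⁻ y, ∫⁻ x, f x * K t y x * g y ∂μ ∂μ := lintegral_lintegral_swap (by fun_prop)
    _ = ∫⁻ x, ∫⁻ y, g x * K t x y * f y ∂μ ∂μ :=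
        lintegral_congr fun _ => lintegral_congr fun _ => by ring

theorem lintegral_mul_lintegral_lintegral_mul_comm_of_detailed_balance
    {k : τ → α → α → ℝ≥0∞} {w : α → ℝ≥0∞}
    (hk : Measurable fun p : τ × α × α => k p.1 p.2.1 p.2.2) (hw : Measurable w)
    (hbal : ∀ᵐ t ∂ν, ∀ᵐ x ∂μ, ∀ᵐ y ∂μ, k t x y * w x = k t y x * w y)
    {f g : α → ℝ≥0∞} (hf : Measurable f) (hg : Measurable g) :
    ∫⁻ x, f x * (∫⁻ t, ∫⁻ y, k t x y * g y ∂μ ∂ν) * w x ∂μ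
      = ∫⁻ x, g x * (∫⁻ t, ∫⁻ y, k t x y * f y ∂μ ∂ν) * w x ∂μ := by
  have hmul : ∀ f g : α → ℝ≥0∞, Measurable g → ∀ x,
      f x * (∫⁻ t, ∫⁻ y, k t x y * g y ∂μ ∂ν) * w x
        = f x * ∫⁻ t, ∫⁻ y, k t x y * w x * g y ∂μ ∂ν := by
    intro f g hg x
    rw [mul_assoc, ← lintegral_mul_const _ (by fun_prop)]
    congr 1
    refine lintegral_congr fun t => ?_
    rw [← lintegral_mul_const _ (by fun_prop)]
    exact lintegral_congr fun y => by ring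
  simp only [hmul f g hg, hmul g f hf]
  exact lintegral_mul_lintegral_lintegral_comm_of_symm (by fun_prop) hbal hf hg

end DetailedBalance

theorem Matrix.IsSymm.dotProduct_mulVec_comm {n R : Type*} [Fintype n] [CommSemiring R]
    {A : Matrix n n R} (hA : A.IsSymm) (u v : n → R) : u ⬝ᵥ A *ᵥ v = v ⬝ᵥ A *ᵥ u := by
  conv_lhs => rw [← hA.eq]
  exact dotProduct_transpose_mulVec A u v

theorem Matrix.IsSymm.dotProduct_mulVec_neg_sub_smul {n R : Type*} [Fintype n] [CommRing R]
    {A : Matrix n n R} (hA : A.IsSymm) (u m : n → R) (t : R) :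
    (-u - t • m) ⬝ᵥ A *ᵥ (-u - t • m)
      = (u - t • m) ⬝ᵥ A *ᵥ (u - t • m) + 4 * t * (m ⬝ᵥ A *ᵥ u) := by
  simp only [dotProduct_sub, sub_dotProduct, mulVec_sub, mulVec_neg, mulVec_smul,
    dotProduct_neg, neg_dotProduct, dotProduct_smul, smul_dotProduct, smul_eq_mul,
    hA.dotProduct_mulVec_comm u m]
  ring

section GeometricBrownianMotion

variable {d : ℕ}

theorem lognormalDensity_mul_weight_comm (a mbar : Fin d → ℝ) {S : Matrix (Fin d) (Fin d) ℝ}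
    (hS : S.IsSymm) {t : ℝ} (ht : t ≠ 0) {x y : Fin d → ℝ} (hx : ∀ i, x i ≠ 0)
    (hy : ∀ i, y i ≠ 0) :
    lognormalDensity a mbar S t x y * weight a mbar S x
      = lognormalDensity a mbar S t y x * weight a mbar S y := by
  set ℓ : (Fin d → ℝ) → Fin d → ℝ := fun v i => (1 / a i) * Real.log (v i) with hℓ
  have hlog_div : ∀ u v : Fin d → ℝ, (∀ i, u i ≠ 0) → (∀ i, v i ≠ 0) →
      (fun i => (1 / a i) * Real.log (v i / u i)) = ℓ v - ℓ u := by
    intro u v hu hv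
    funext i
    simp only [hℓ, Pi.sub_apply, Real.log_div (hv i) (hu i)]
    ring
  have hweight : ∀ v, weight a mbar S v = (∏ i, (v i)⁻¹) * exp (2 * (mbar ⬝ᵥ S⁻¹ *ᵥ ℓ v)) :=
    fun _ => rfl
  have hjacobian : (∏ i, a i * y i)⁻¹ * (∏ i, (x i)⁻¹) = (∏ i, a i * x i)⁻¹ * (∏ i, (y i)⁻¹) := by
    simp only [Finset.prod_mul_distrib, mul_inv, Finset.prod_inv_distrib]
    ring
  have hexponent :
      exp (-(1 / (2 * t)) * ((ℓ y - ℓ x - t • mbar) ⬝ᵥ S⁻¹ *ᵥ (ℓ y - ℓ x - t • mbar)))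
          * exp (2 * (mbar ⬝ᵥ S⁻¹ *ᵥ ℓ x))
        = exp (-(1 / (2 * t)) * ((ℓ x - ℓ y - t • mbar) ⬝ᵥ S⁻¹ *ᵥ (ℓ x - ℓ y - t • mbar)))
          * exp (2 * (mbar ⬝ᵥ S⁻¹ *ᵥ ℓ y)) := by
    rw [← exp_add, ← exp_add, show ℓ x - ℓ y = -(ℓ y - ℓ x) by abel,
      hS.inv.dotProduct_mulVec_neg_sub_smul, mulVec_sub S⁻¹ (ℓ y), dotProduct_sub mbar]
    congr 1
    field_simp
    ring
  unfold lognormalDensity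
  simp only [hlog_div x y hx hy, hlog_div y x hy hx, hweight]
  linear_combination (2 * π * t) ^ (-(d : ℝ) / 2) * S.det ^ (-(1 : ℝ) / 2) *
    congr (congrArg HMul.hMul hjacobian) hexponent

theorem weight_nonneg (a mbar : Fin d → ℝ) (S : Matrix (Fin d) (Fin d) ℝ) {y : Fin d → ℝ}
    (hy : ∀ i, 0 ≤ y i) : 0 ≤ weight a mbar S y :=
  mul_nonneg (Finset.prod_nonneg fun i _ => inv_nonneg.2 (hy i)) (exp_pos _).le

theorem ofReal_mul_lognormalDensity_mul_ofReal_weight_comm (a mbar : Fin d → ℝ)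
    {S : Matrix (Fin d) (Fin d) ℝ} (hS : S.IsSymm) (c : ℝ) {t : ℝ} (ht : t ≠ 0)
    {x y : Fin d → ℝ} (hx : ∀ i, 0 < x i) (hy : ∀ i, 0 < y i) :
    ENNReal.ofReal (c * lognormalDensity a mbar S t x y) * ENNReal.ofReal (weight a mbar S x)
      = ENNReal.ofReal (c * lognormalDensity a mbar S t y x)
        * ENNReal.ofReal (weight a mbar S y) := by
  rw [← ENNReal.ofReal_mul' (weight_nonneg a mbar S fun i => (hx i).le),
    ← ENNReal.ofReal_mul' (weight_nonneg a mbar S fun i => (hy i).le), mul_assoc, mul_assoc,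
    lognormalDensity_mul_weight_comm a mbar hS ht (fun i => (hx i).ne') fun i => (hy i).ne']

theorem measurable_lognormalDensity (a mbar : Fin d → ℝ) (S : Matrix (Fin d) (Fin d) ℝ) :
    Measurable fun p : ℝ × (Fin d → ℝ) × (Fin d → ℝ) =>
      lognormalDensity a mbar S p.1 p.2.1 p.2.2 := by
  unfold lognormalDensity
  fun_prop

theorem measurable_weight (a mbar : Fin d → ℝ) (S : Matrix (Fin d) (Fin d) ℝ) :
    Measurable (weight a mbar S) := by
  unfold weight
  fun_prop

end GeometricBrownianMotion

theorem resolvent_self_dual_general {d : ℕ} (a μ : Fin d → ℝ)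
    (S : Matrix (Fin d) (Fin d) ℝ) (hS : S.PosDef)
    (r : ℝ)
    (f g : (Fin d → ℝ) → ℝ≥0∞) (hf : Measurable f) (hg : Measurable g) :
    (∫⁻ x in Set.univ.pi fun _ : Fin d => Set.Ioi (0 : ℝ),
        f x * gbmResolvent a (fun i => (μ i - (a i) ^ 2 / 2) / a i) S r g x *
          ENNReal.ofReal (weight a (fun i => (μ i - (a i) ^ 2 / 2) / a i) S x))
      = ∫⁻ x in Set.univ.pi fun _ : Fin d => Set.Ioi (0 : ℝ),
        g x * gbmResolvent a (fun i => (μ i - (a i) ^ 2 / 2) / a i) S r f x *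
          ENNReal.ofReal (weight a (fun i => (μ i - (a i) ^ 2 / 2) / a i) S x) := by
  set mbar : Fin d → ℝ := fun i => (μ i - (a i) ^ 2 / 2) / a i
  set P := Set.univ.pi fun _ : Fin d => Set.Ioi (0 : ℝ)
  have hbal : ∀ᵐ t ∂volume.restrict (Set.Ioi 0), ∀ᵐ x ∂volume.restrict P, ∀ᵐ y ∂volume.restrict P,
      ENNReal.ofReal (exp (-r * t) * lognormalDensity a mbar S t x y)
          * ENNReal.ofReal (weight a mbar S x)
        = ENNReal.ofReal (exp (-r * t) * lognormalDensity a mbar S t y x)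
          * ENNReal.ofReal (weight a mbar S y) := by
    have hP : MeasurableSet P := .univ_pi fun _ => measurableSet_Ioi
    filter_upwards [ae_restrict_mem measurableSet_Ioi] with t ht
    filter_upwards [ae_restrict_mem hP] with x hx
    filter_upwards [ae_restrict_mem hP] with y hy
    exact ofReal_mul_lognormalDensity_mul_ofReal_weight_comm a mbar
      (isHermitian_iff_isSymm.mp hS.isHermitian) _ (ne_of_gt ht) (fun i => hx i trivial)
      fun i => hy i trivial
  exact lintegral_mul_lintegral_lintegral_mul_comm_of_detailed_balance
    ((measurable_fst.const_mul (-r)).exp.mul (measurable_lognormalDensity a mbar S)).ennreal_ofReal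
    (measurable_weight a mbar S).ennreal_ofReal hbal hf hg

/-- Self-duality of the resolvent of `d`-dimensional geometric Brownian motion with
respect to the measure `m(dx) = h(x) dx`:
`∫ f(x) G_r g(x) h(x) dx = ∫ g(x) G_r f(x) h(x) dx` for all nonnegative measurable
`f, g`. -/
theorem resolvent_self_dual {d : ℕ} (hd : 1 ≤ d) (a μ : Fin d → ℝ) (ha : ∀ i, 0 < a i)
    (S : Matrix (Fin d) (Fin d) ℝ) (hS : S.PosDef) (hdiag : ∀ i, S i i = 1)
    (r : ℝ) (hr : 0 < r)
    (f g : (Fin d → ℝ) → ℝ≥0∞) (hf : Measurable f) (hg : Measurable g) :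
    (∫⁻ x in Set.univ.pi fun _ : Fin d => Set.Ioi (0 : ℝ),
        f x * gbmResolvent a (fun i => (μ i - (a i) ^ 2 / 2) / a i) S r g x *
          ENNReal.ofReal (weight a (fun i => (μ i - (a i) ^ 2 / 2) / a i) S x))
      = ∫⁻ x in Set.univ.pi fun _ : Fin d => Set.Ioi (0 : ℝ),
        g x * gbmResolvent a (fun i => (μ i - (a i) ^ 2 / 2) / a i) S r f x *
          ENNReal.ofReal (weight a (fun i => (μ i - (a i) ^ 2 / 2) / a i) S x) :=
  resolvent_self_dual_general a μ S hS r f g hf hg
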